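/- Let (U(σ))_{σ∈Q_N} be i.i.d. Gaussian with mean 0 and variance N. Then almost surely lim_{N→∞} N^{-1} ln(2^{-N} Σ_{σ∈Q_N} e^{−βU(σ)}) = p₀(β), where p₀(β) = β²/2 for 0 ≤ β ≤ β_c = √(2 ln 2) and p₀(β) = ββ_c − ln 2 for β > β_c. -/

import Mathlib

/-!
Upper bound: the normalized partition function has mean `𝔼 Z_N(β) = exp (N β² / 2)`, so Markov's inequality and Borel–Cantelli give
`N⁻¹ log Z_N(β) ≤ β² / 2 + o(1)` almost surely. For `β > βc` the log-sum-exp inequality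
`log ∑ exp (s aᵢ) ≤ (s / t) log ∑ exp (t aᵢ)` (`0 < t ≤ s`), applied with `t = βc`, turns the bound
at `βc`, where `βc² / 2 = log 2`, into `β βc - log 2`.

Lower bound: for `0 ≤ x < βc` the number of configurations with energy in `[-N x - 1, -N x]` has
mean `2^N q_N` with `q_N ≥ exp (-N (x² / 2 + o(1)))`, which grows exponentially since
`x² / 2 < log 2`. By independence, Chebyshev's inequality and Borel–Cantelli, this number is almost
surely eventually at least half its mean, whence `N⁻¹ log Z_N(β) ≥ β x - x² / 2 - o(1)`; the
supremum of `β x - x² / 2` over `0 ≤ x < βc` is `p0 β`.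
-/

open MeasureTheory ProbabilityTheory

abbrev Conf (N : ℕ) := Fin N → Bool

noncomputable def βc : ℝ := Real.sqrt (2 * Real.log 2)

noncomputable def p0 (β : ℝ) : ℝ := if β ≤ βc then β ^ 2 / 2 else β * βc - Real.log 2

open Real Filter Topology Finset Set

open scoped NNReal

lemma log_sum_exp_mul_le {ι : Type*} [Fintype ι] [Nonempty ι] (a : ι → ℝ) {s t : ℝ}
    (ht : 0 < t) (hts : t ≤ s) :
    log (∑ i, exp (s * a i)) ≤ s / t * log (∑ i, exp (t * a i)) := by
  have hpos : 0 < ∑ i, exp (t * a i) := sum_pos (fun i _ => exp_pos _) univ_nonempty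
  have hle : ∀ i, t * a i ≤ log (∑ j, exp (t * a j)) := fun i => by
    rw [le_log_iff_exp_le hpos]
    exact single_le_sum (f := fun j => exp (t * a j)) (fun j _ => (exp_pos _).le) (mem_univ i)
  rw [log_le_iff_le_exp (sum_pos (fun i _ => exp_pos _) univ_nonempty)]
  calc ∑ i, exp (s * a i) = ∑ i, exp (t * a i) * exp ((s - t) / t * (t * a i)) := by
        refine sum_congr rfl fun i _ => ?_
        rw [← exp_add]
        field_simp
        ring_nf
    _ ≤ ∑ i, exp (t * a i) * exp ((s - t) / t * log (∑ j, exp (t * a j))) := by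
        gcongr with i
        exact hle i
    _ = exp (s / t * log (∑ j, exp (t * a j))) := by
        rw [← sum_mul]
        nth_rewrite 1 [← exp_log hpos]
        rw [← exp_add]
        congr 1
        field_simp
        ring

lemma ae_eventually_notMem_of_summable {Ω : Type*} [MeasurableSpace Ω] {P : Measure Ω}
    [IsFiniteMeasure P] {A : ℕ → Set Ω} {f : ℕ → ℝ} (hf : Summable f)
    (h : ∀ᶠ n in atTop, P.real (A n) ≤ f n) : ∀ᵐ ω ∂P, ∀ᶠ n in atTop, ω ∉ A n := by
  have hs : Summable fun n => P.real (A n) := hf.of_norm_bounded_eventually_nat <|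
    h.mono fun n hn => by rwa [Real.norm_of_nonneg measureReal_nonneg]
  refine ae_eventually_notMem ?_
  simp_rw [← fun n => ofReal_measureReal (μ := P) (s := A n)]
  rw [← ENNReal.ofReal_tsum_of_nonneg (fun n => measureReal_nonneg) hs]
  exact ENNReal.ofReal_ne_top

lemma ae_tendsto_of_forall_ae_eventually {Ω ι : Type*} [MeasurableSpace Ω] {P : Measure Ω}
    {l : Filter ι} {F : ι → Ω → ℝ} {a : ℝ}
    (hlow : ∀ ε > 0, ∀ᵐ ω ∂P, ∀ᶠ n in l, a - ε ≤ F n ω)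
    (hup : ∀ ε > 0, ∀ᵐ ω ∂P, ∀ᶠ n in l, F n ω ≤ a + ε) :
    ∀ᵐ ω ∂P, Tendsto (F · ω) l (𝓝 a) := by
  have h : ∀ᵐ ω ∂P, ∀ k : ℕ, ∀ᶠ n in l, |F n ω - a| ≤ 1 / (k + 1) := by
    refine ae_all_iff.2 fun k => ?_
    filter_upwards [hlow _ k.one_div_pos_of_nat, hup _ k.one_div_pos_of_nat] with ω hl hu
    filter_upwards [hl, hu] with n hln hun
    exact abs_le.2 ⟨by linarith, by linarith⟩
  filter_upwards [h] with ω hω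
  refine Metric.tendsto_nhds.2 fun ε hε => ?_
  obtain ⟨k, hk⟩ := exists_nat_one_div_lt hε
  filter_upwards [hω k] with n hn
  exact (Real.dist_eq _ _).trans_le hn |>.trans_lt hk

lemma integrable_exp_mul_of_map_eq_gaussianReal {Ω : Type*} [MeasurableSpace Ω] {P : Measure Ω}
    [IsProbabilityMeasure P] {X : Ω → ℝ} {μ : ℝ} {v : ℝ≥0} (hX : P.map X = gaussianReal μ v)
    (t : ℝ) : Integrable (fun ω => exp (t * X ω)) P :=
  mgf_pos_iff.1 (by rw [mgf_gaussianReal hX]; positivity)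

lemma mul_gaussianPDFReal_le_measureReal_Icc {μ : ℝ} {v : ℝ≥0} (hv : v ≠ 0) {a b : ℝ}
    (hab : a ≤ b) (hb : b ≤ μ) :
    (b - a) * gaussianPDFReal μ v a ≤ (gaussianReal μ v).real (Icc a b) := by
  rw [measureReal_def, gaussianReal_apply_eq_integral μ hv, ENNReal.toReal_ofReal
    (setIntegral_nonneg measurableSet_Icc fun x _ => gaussianPDFReal_nonneg μ v x)]
  calc (b - a) * gaussianPDFReal μ v a = ∫ _ in Icc a b, gaussianPDFReal μ v a := by
        simp [hab]
    _ ≤ ∫ x in Icc a b, gaussianPDFReal μ v x := by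
        refine setIntegral_mono_on (integrableOn_const (by simp))
          (integrable_gaussianPDFReal μ v).integrableOn measurableSet_Icc fun x hx => ?_
        have hsq : (x - μ) ^ 2 ≤ (a - μ) ^ 2 := by nlinarith [hx.1, hx.2]
        simp only [gaussianPDFReal]
        gcongr _ * exp ?_
        exact div_le_div_of_nonneg_right (neg_le_neg hsq) (by positivity)

abbrev energyWindow (N : ℕ) (x : ℝ) : Set ℝ := Icc (-(N * x) - 1) (-(N * x))

lemma eventually_exp_le_gaussianReal_Icc {x δ : ℝ} (hx : 0 ≤ x) (hδ : 0 < δ) :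
    ∀ᶠ N : ℕ in atTop, exp (-(N * (x ^ 2 / 2 + δ)))
      ≤ (gaussianReal 0 N).real (energyWindow N x) := by
  have hpoly : ∀ᶠ N : ℕ in atTop, (N : ℝ) ≤ (2 * π)⁻¹ * exp (-(2 * (x + 1))) * exp (2 * δ * N) :=
    tendsto_natCast_atTop_atTop.eventually <| by
      filter_upwards [(isLittleO_pow_exp_pos_mul_atTop 1 (by positivity : 0 < 2 * δ)).def
        (by positivity : 0 < (2 * π)⁻¹ * exp (-(2 * (x + 1))))] with y hy
      rw [pow_one, norm_of_nonneg (exp_pos _).le] at hy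
      exact (le_norm_self y).trans hy
  filter_upwards [hpoly, eventually_ge_atTop 1] with N hN hN1
  have hN0 : (1 : ℝ) ≤ N := by exact_mod_cast hN1
  have hsqrt : √(2 * π * N) ≤ exp (δ * N - (x + 1)) := by
    refine Real.sqrt_le_iff.2 ⟨(exp_pos _).le, ?_⟩
    rw [← exp_nat_mul]
    calc 2 * π * N ≤ exp (-(2 * (x + 1))) * exp (2 * δ * N) := by
          rw [mul_assoc, inv_mul_eq_div, le_div_iff₀ (by positivity)] at hN
          linarith
      _ = exp ((2 : ℕ) * (δ * N - (x + 1))) := by rw [← exp_add]; push_cast; ring_nf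
  refine le_trans ?_ (mul_gaussianPDFReal_le_measureReal_Icc (by exact_mod_cast (by omega : N ≠ 0))
    (by linarith) (by nlinarith))
  rw [sub_sub_cancel, one_mul, gaussianPDFReal, ← div_eq_inv_mul,
    le_div_iff₀ (by positivity)]
  calc exp (-(N * (x ^ 2 / 2 + δ))) * √(2 * π * N)
      ≤ exp (-(N * (x ^ 2 / 2 + δ))) * exp (δ * N - (x + 1)) := by gcongr
    _ = exp (-(N * x ^ 2 / 2 + x + 1)) := by rw [← exp_add]; ring_nf
    _ ≤ exp (-(-(N * x) - 1 - 0) ^ 2 / (2 * N)) := by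
        gcongr
        rw [le_div_iff₀ (by positivity)]
        nlinarith

lemma variance_indicator_one_le {Ω : Type*} [MeasurableSpace Ω] {P : Measure Ω}
    [IsProbabilityMeasure P] {A : Set Ω} (hA : MeasurableSet A) :
    variance (A.indicator 1) P ≤ P.real A := by
  have h01 : ∀ᵐ ω ∂P, A.indicator (1 : Ω → ℝ) ω ∈ Icc (0 : ℝ) 1 := ae_of_all _ fun ω => by
    by_cases h : ω ∈ A <;> simp [h]
  have := variance_le_sub_mul_sub h01 (measurable_one.indicator hA).aemeasurable
  rw [integral_indicator_one hA] at this
  nlinarith [measureReal_nonneg (μ := P) (s := A)]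

lemma measureReal_card_le_half_le {Ω ι : Type*} [MeasurableSpace Ω] {P : Measure Ω}
    [IsProbabilityMeasure P] [Fintype ι] {X : ι → Ω → ℝ} (hX : ∀ i, Measurable (X i))
    (hindep : iIndepFun X P) {s : Set ℝ} [DecidablePred (· ∈ s)] (hs : MeasurableSet s)
    (hm : 0 < ∑ i, P.real (X i ⁻¹' s)) :
    P.real {ω | (#{i | X i ω ∈ s} : ℝ) ≤ (∑ i, P.real (X i ⁻¹' s)) / 2}
      ≤ 4 / ∑ i, P.real (X i ⁻¹' s) := by
  set m := ∑ i, P.real (X i ⁻¹' s)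
  set Y : ι → Ω → ℝ := fun i => (X i ⁻¹' s).indicator 1 with hYdef
  have hYm : ∀ i, MeasurableSet (X i ⁻¹' s) := fun i => hX i hs
  have hYL2 : ∀ i, MemLp (Y i) 2 P := fun i =>
    memLp_indicator_const 2 (hYm i) (1 : ℝ) (Or.inr (measure_ne_top P _))
  have hE : P[∑ i, Y i] = m := by
    simp only [Finset.sum_apply]
    rw [integral_finsetSum _ fun i _ => (hYL2 i).integrable one_le_two]
    exact sum_congr rfl fun i _ => integral_indicator_one (hYm i)
  have hvar : variance (∑ i, Y i) P ≤ m := by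
    rw [IndepFun.variance_sum (fun i _ => hYL2 i) fun i _ j _ hij =>
      (hindep.indepFun hij).comp (measurable_one.indicator hs) (measurable_one.indicator hs)]
    exact sum_le_sum fun i _ => variance_indicator_one_le (hYm i)
  have hsub : {ω | (#{i | X i ω ∈ s} : ℝ) ≤ m / 2}
      ⊆ {ω | m / 2 ≤ |(∑ i, Y i) ω - P[∑ i, Y i]|} := by
    intro ω hω
    have hcount : (#{i | X i ω ∈ s} : ℝ) = (∑ i, Y i) ω := by
      rw [natCast_card_filter, Finset.sum_apply]
      refine sum_congr rfl fun i _ => ?_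
      by_cases h : X i ω ∈ s <;> simp [hYdef, h]
    simp only [mem_ofPred_eq, hE, ← hcount] at hω ⊢
    rw [abs_sub_comm, abs_of_nonneg (by linarith)]
    linarith
  calc P.real {ω | (#{i | X i ω ∈ s} : ℝ) ≤ m / 2}
      ≤ P.real {ω | m / 2 ≤ |(∑ i, Y i) ω - P[∑ i, Y i]|} := measureReal_mono hsub
    _ ≤ variance (∑ i, Y i) P / (m / 2) ^ 2 :=
        ENNReal.toReal_le_of_le_ofReal (div_nonneg (variance_nonneg _ _) (sq_nonneg _))
          (meas_ge_le_variance_div_sq (memLp_finsetSum' _ fun i _ => hYL2 i) (half_pos hm))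
    _ ≤ m / (m / 2) ^ 2 := by gcongr
    _ = 4 / m := by field_simp; ring

lemma βc_pos : 0 < βc := sqrt_pos.2 (by positivity)

lemma βc_sq : βc ^ 2 = 2 * log 2 := sq_sqrt (by positivity)

lemma p0_of_le_βc {β : ℝ} (h : β ≤ βc) : p0 β = β ^ 2 / 2 := if_pos h

lemma p0_of_βc_le {β : ℝ} (h : βc ≤ β) : p0 β = β * βc - log 2 := by
  rcases h.eq_or_lt with rfl | h
  · rw [p0_of_le_βc le_rfl]
    nlinarith [βc_sq]
  · exact if_neg h.not_ge

lemma exists_lt_βc_p0_sub_le {β ε : ℝ} (hβ : 0 ≤ β) (hε : 0 < ε) :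
    ∃ x, 0 ≤ x ∧ x < βc ∧ p0 β - ε ≤ β * x - x ^ 2 / 2 := by
  rcases lt_or_ge β βc with h | h
  · exact ⟨β, hβ, h, by rw [p0_of_le_βc h.le]; linarith⟩
  · have hlim : Tendsto (fun x => β * x - x ^ 2 / 2) (𝓝[<] βc) (𝓝 (p0 β)) := by
      rw [p0_of_βc_le h, show β * βc - log 2 = β * βc - βc ^ 2 / 2 by rw [βc_sq]; ring]
      exact ((continuous_const.mul continuous_id).sub
        ((continuous_pow 2).div_const 2)).tendsto βc |>.mono_left nhdsWithin_le_nhds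
    obtain ⟨x, hx, hxβc⟩ := ((hlim.eventually (lt_mem_nhds (sub_lt_self _ hε))).and
      (Ioo_mem_nhdsLT βc_pos)).exists
    exact ⟨x, hxβc.1.le, hxβc.2, hx.le⟩

noncomputable def partitionFunction (N : ℕ) (β : ℝ) (u : Conf N → ℝ) : ℝ :=
  ((2 : ℝ) ^ N)⁻¹ * ∑ σ, exp (-β * u σ)

noncomputable def pressure (N : ℕ) (β : ℝ) (u : Conf N → ℝ) : ℝ :=
  (N : ℝ)⁻¹ * log (partitionFunction N β u)

section Pressure

variable {N : ℕ} {β : ℝ} {u : Conf N → ℝ}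

lemma partitionFunction_pos : 0 < partitionFunction N β u :=
  mul_pos (by positivity) (sum_pos (fun σ _ => exp_pos _) univ_nonempty)

lemma pressure_le_iff (hN : N ≠ 0) {c : ℝ} :
    pressure N β u ≤ c ↔ partitionFunction N β u ≤ exp (N * c) := by
  rw [pressure, inv_mul_le_iff₀ (by positivity), log_le_iff_le_exp partitionFunction_pos]

lemma le_pressure_iff (hN : N ≠ 0) {c : ℝ} :
    c ≤ pressure N β u ↔ exp (N * c) ≤ partitionFunction N β u := by
  rw [pressure, le_inv_mul_iff₀ (by positivity), le_log_iff_exp_le partitionFunction_pos]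

lemma pressure_add_log_two (hN : N ≠ 0) (β : ℝ) :
    pressure N β u + log 2 = (N : ℝ)⁻¹ * log (∑ σ, exp (β * -u σ)) := by
  have hS : 0 < ∑ σ, exp (β * -u σ) := sum_pos (fun σ _ => exp_pos _) univ_nonempty
  simp_rw [pressure, partitionFunction, neg_mul_comm]
  rw [log_mul (by positivity) hS.ne', log_inv, log_pow]
  field_simp
  ring

lemma pressure_add_log_two_le (hN : N ≠ 0) {s t : ℝ} (ht : 0 < t) (hts : t ≤ s) :
    pressure N s u + log 2 ≤ s / t * (pressure N t u + log 2) := by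
  rw [pressure_add_log_two hN, pressure_add_log_two hN, mul_left_comm]
  gcongr
  exact log_sum_exp_mul_le _ ht hts

lemma card_mul_exp_le_partitionFunction {s : Set ℝ} [DecidablePred (· ∈ s)] {y : ℝ}
    (hs : s ⊆ Iic (-y)) (hβ : 0 ≤ β) :
    ((2 : ℝ) ^ N)⁻¹ * (#{σ | u σ ∈ s} * exp (β * y)) ≤ partitionFunction N β u := by
  refine mul_le_mul_of_nonneg_left ?_ (by positivity)
  calc (#{σ | u σ ∈ s} : ℝ) * exp (β * y) ≤ ∑ σ ∈ {σ | u σ ∈ s}, exp (-β * u σ) := by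
        rw [← nsmul_eq_mul]
        refine card_nsmul_le_sum _ _ _ fun σ hσ => exp_le_exp.2 ?_
        have := hs (mem_filter.1 hσ).2
        nlinarith [mem_Iic.1 this]
    _ ≤ ∑ σ, exp (-β * u σ) :=
        sum_le_sum_of_subset_of_nonneg (subset_univ _) fun σ _ _ => (exp_pos _).le

end Pressure

section REM

variable {Ω : Type*} [MeasurableSpace Ω] {P : Measure Ω} [IsProbabilityMeasure P]
  {U : (N : ℕ) → Conf N → Ω → ℝ}

lemma integral_partitionFunction (hdist : ∀ N σ, P.map (U N σ) = gaussianReal 0 (N : ℝ≥0))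
    (N : ℕ) (β : ℝ) :
    ∫ ω, partitionFunction N β (U N · ω) ∂P = exp (N * β ^ 2 / 2) := by
  simp only [partitionFunction]
  rw [integral_const_mul, integral_finsetSum _ fun σ _ =>
    integrable_exp_mul_of_map_eq_gaussianReal (hdist N σ) _]
  have hmgf : ∀ σ, ∫ ω, exp (-β * U N σ ω) ∂P = exp (N * β ^ 2 / 2) := fun σ => by
    change mgf (U N σ) P (-β) = _
    rw [mgf_gaussianReal (hdist N σ), NNReal.coe_natCast]
    ring_nf
  simp only [hmgf, sum_const, card_univ, Fintype.card_fun, Fintype.card_bool, Fintype.card_fin,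
    nsmul_eq_mul]
  push_cast
  field_simp

lemma ae_eventually_pressure_le_sq_div_two_add
    (hdist : ∀ N σ, P.map (U N σ) = gaussianReal 0 (N : ℝ≥0)) (β : ℝ) {ε : ℝ} (hε : 0 < ε) :
    ∀ᵐ ω ∂P, ∀ᶠ N in atTop, pressure N β (U N · ω) ≤ β ^ 2 / 2 + ε := by
  have hmarkov : ∀ N : ℕ, P.real {ω | exp (N * (β ^ 2 / 2 + ε)) ≤ partitionFunction N β (U N · ω)}
      ≤ exp (N * -ε) := by
    intro N
    have hint : Integrable (fun ω => partitionFunction N β (U N · ω)) P :=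
      (integrable_finsetSum _ fun σ _ =>
        integrable_exp_mul_of_map_eq_gaussianReal (hdist N σ) _).const_mul _
    have := mul_meas_ge_le_integral_of_nonneg (ae_of_all _ fun ω => partitionFunction_pos.le)
      hint (exp (N * (β ^ 2 / 2 + ε)))
    rw [integral_partitionFunction hdist, ← le_div_iff₀' (exp_pos _), ← exp_sub] at this
    exact this.trans_eq (by ring_nf)
  filter_upwards [ae_eventually_notMem_of_summable
    (summable_exp_nat_mul_iff.2 (neg_neg_of_pos hε)) (Eventually.of_forall hmarkov)] with ω hω
  filter_upwards [hω, eventually_ne_atTop 0] with N hN hN0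
  exact (pressure_le_iff hN0).2 (not_le.1 hN).le

lemma ae_eventually_pressure_le_p0_add
    (hdist : ∀ N σ, P.map (U N σ) = gaussianReal 0 (N : ℝ≥0)) {β ε : ℝ} (hε : 0 < ε) :
    ∀ᵐ ω ∂P, ∀ᶠ N in atTop, pressure N β (U N · ω) ≤ p0 β + ε := by
  rcases le_or_gt β βc with h | h
  · rw [p0_of_le_βc h]
    exact ae_eventually_pressure_le_sq_div_two_add hdist β hε
  have hβ : 0 < β := βc_pos.trans h
  filter_upwards [ae_eventually_pressure_le_sq_div_two_add hdist βc
    (div_pos (mul_pos hε βc_pos) hβ)] with ω hω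
  filter_upwards [hω, eventually_ne_atTop 0] with N hN hN0
  have hlog : log 2 = βc ^ 2 / 2 := by rw [βc_sq]; ring
  have := pressure_add_log_two_le (u := (U N · ω)) hN0 βc_pos h.le
  rw [p0_of_βc_le h.le]
  calc pressure N β (U N · ω) ≤ β / βc * (pressure N βc (U N · ω) + log 2) - log 2 := by
        linarith
    _ ≤ β / βc * (βc ^ 2 / 2 + ε * βc / β + log 2) - log 2 := by
        gcongr
        exact div_nonneg hβ.le βc_pos.le
    _ = β * βc - log 2 + ε := by
        have := βc_pos.ne'
        rw [hlog]
        field_simp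
        ring

lemma ae_eventually_half_mean_lt_card (hmeas : ∀ N σ, Measurable (U N σ))
    (hdist : ∀ N σ, P.map (U N σ) = gaussianReal 0 (N : ℝ≥0))
    (hindep : ∀ N, iIndepFun (U N) P) {x δ : ℝ} (hx : 0 ≤ x) (hδ : 0 < δ)
    (hxδ : x ^ 2 / 2 + δ < log 2) :
    ∀ᵐ ω ∂P, ∀ᶠ N : ℕ in atTop, 2 ^ N * (gaussianReal 0 N).real (energyWindow N x) / 2
      < #{σ | U N σ ω ∈ energyWindow N x} := by
  set q : ℕ → ℝ := fun N => (gaussianReal 0 N).real (energyWindow N x)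
  have hmean : ∀ N, ∑ σ, P.real (U N σ ⁻¹' energyWindow N x) = 2 ^ N * q N := fun N => by
    have hσ : ∀ σ, P.real (U N σ ⁻¹' energyWindow N x) = q N := fun σ => by
      rw [← map_measureReal_apply (hmeas N σ) measurableSet_Icc, hdist]
    simp only [hσ, sum_const, card_univ, Fintype.card_fun, Fintype.card_bool, Fintype.card_fin,
      nsmul_eq_mul]
    push_cast
    rfl
  have hcheb : ∀ᶠ N : ℕ in atTop,
      P.real {ω | (#{σ | U N σ ω ∈ energyWindow N x} : ℝ) ≤ 2 ^ N * q N / 2}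
        ≤ 4 * exp (N * -(log 2 - (x ^ 2 / 2 + δ))) := by
    filter_upwards [eventually_exp_le_gaussianReal_Icc hx hδ] with N hqN
    have hm : 0 < ∑ σ, P.real (U N σ ⁻¹' energyWindow N x) := by
      rw [hmean]
      exact mul_pos (by positivity) ((exp_pos _).trans_le hqN)
    have := measureReal_card_le_half_le (hmeas N) (hindep N) measurableSet_Icc hm
    rw [hmean] at this
    refine this.trans ?_
    have h2 : (2 : ℝ) ^ N = exp (N * log 2) := by rw [exp_nat_mul, exp_log two_pos]
    calc 4 / (2 ^ N * q N) ≤ 4 / (2 ^ N * exp (-(N * (x ^ 2 / 2 + δ)))) := by gcongr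
      _ = 4 * exp (N * -(log 2 - (x ^ 2 / 2 + δ))) := by
        rw [h2, ← exp_add, div_eq_mul_inv, ← exp_neg]
        ring_nf
  filter_upwards [ae_eventually_notMem_of_summable
    ((summable_exp_nat_mul_iff.2 (by linarith)).mul_left 4) hcheb] with ω hω
  exact hω.mono fun N hN => not_le.1 hN

lemma ae_eventually_le_pressure (hmeas : ∀ N σ, Measurable (U N σ))
    (hdist : ∀ N σ, P.map (U N σ) = gaussianReal 0 (N : ℝ≥0))
    (hindep : ∀ N, iIndepFun (U N) P) {β x ε : ℝ} (hβ : 0 ≤ β) (hx : 0 ≤ x) (hxβc : x < βc)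
    (hε : 0 < ε) :
    ∀ᵐ ω ∂P, ∀ᶠ N in atTop, β * x - x ^ 2 / 2 - ε ≤ pressure N β (U N · ω) := by
  have hgap : x ^ 2 / 2 < log 2 := by nlinarith [βc_sq, βc_pos]
  obtain ⟨δ, hδ, hδε, hxδ⟩ : ∃ δ, 0 < δ ∧ δ < ε ∧ x ^ 2 / 2 + δ < log 2 :=
    ⟨min (ε / 2) ((log 2 - x ^ 2 / 2) / 2), by positivity,
      by linarith [min_le_left (ε / 2) ((log 2 - x ^ 2 / 2) / 2)],
      by linarith [min_le_right (ε / 2) ((log 2 - x ^ 2 / 2) / 2)]⟩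
  have hbig : ∀ᶠ N : ℕ in atTop, 2 ≤ exp (N * (ε - δ)) :=
    (tendsto_exp_atTop.comp (tendsto_natCast_atTop_atTop.atTop_mul_const
      (sub_pos.2 hδε))).eventually_ge_atTop 2
  filter_upwards [ae_eventually_half_mean_lt_card hmeas hdist hindep hx hδ hxδ] with ω hω
  filter_upwards [hω, eventually_exp_le_gaussianReal_Icc hx hδ, hbig, eventually_ne_atTop 0]
    with N hcount hqN hbigN hN0
  rw [le_pressure_iff hN0]
  refine le_trans ?_ (card_mul_exp_le_partitionFunction (s := energyWindow N x) (y := N * x)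
    (fun y hy => hy.2) hβ)
  calc exp (N * (β * x - x ^ 2 / 2 - ε))
      = exp (-(N * (x ^ 2 / 2 + δ))) / exp (N * (ε - δ)) * exp (β * (N * x)) := by
        rw [← exp_sub, ← exp_add]
        ring_nf
    _ ≤ (gaussianReal 0 N).real (energyWindow N x) / 2 * exp (β * (N * x)) := by gcongr
    _ ≤ ((2 : ℝ) ^ N)⁻¹ * (#{σ | U N σ ω ∈ energyWindow N x} * exp (β * (N * x))) := by
        rw [← mul_assoc ((2 : ℝ) ^ N)⁻¹]
        refine mul_le_mul_of_nonneg_right ?_ (exp_pos _).le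
        rw [le_inv_mul_iff₀ (by positivity)]
        linarith

lemma ae_eventually_p0_sub_le_pressure (hmeas : ∀ N σ, Measurable (U N σ))
    (hdist : ∀ N σ, P.map (U N σ) = gaussianReal 0 (N : ℝ≥0))
    (hindep : ∀ N, iIndepFun (U N) P) {β ε : ℝ} (hβ : 0 ≤ β) (hε : 0 < ε) :
    ∀ᵐ ω ∂P, ∀ᶠ N in atTop, p0 β - ε ≤ pressure N β (U N · ω) := by
  obtain ⟨x, hx, hxβc, hpx⟩ := exists_lt_βc_p0_sub_le hβ (half_pos hε)
  filter_upwards [ae_eventually_le_pressure hmeas hdist hindep hβ hx hxβc (half_pos hε)]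
    with ω hω
  exact hω.mono fun N hN => by linarith

end REM

/-- Derrida's REM free-energy theorem: almost surely
`N⁻¹ ln(2^{-N} Σ_σ e^{−βU(σ)}) → p₀(β)`. -/
theorem stmt13 {Ω : Type*} [MeasurableSpace Ω] (P : Measure Ω) [IsProbabilityMeasure P]
    (U : (N : ℕ) → Conf N → Ω → ℝ)
    (hmeas : ∀ N σ, Measurable (U N σ))
    (hdist : ∀ N σ, P.map (U N σ) = gaussianReal 0 (N : NNReal))
    (hindep : ∀ N, iIndepFun (m := fun _ : Conf N => Real.measurableSpace) (U N) P)
    (β : ℝ) (hβ : 0 ≤ β) :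
    ∀ᵐ ω ∂P, Filter.Tendsto (fun N : ℕ =>
        (N : ℝ)⁻¹ * Real.log (((2 : ℝ) ^ N)⁻¹ * ∑ σ : Conf N, Real.exp (-β * U N σ ω)))
      Filter.atTop (nhds (p0 β)) :=
  ae_tendsto_of_forall_ae_eventually (F := fun N ω => pressure N β (U N · ω))
    (fun _ hε => ae_eventually_p0_sub_le_pressure hmeas hdist hindep hβ hε)
    (fun _ hε => ae_eventually_pressure_le_p0_add hdist hε)
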